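/- arXiv:0806.3110 — 4 statements merged into one kernel-verified Lean document; each statement's English description precedes it below -/
import Mathlib

section
/- Let A and B be Q-divisors on a smooth complete surface such that the intersection matrix of B is negative definite and A·B_i ≤ 0 for each irreducible component B_i of B. If A + B is effective, then A is effective. -/
/-- An abstract model of a smooth complete surface: a type of irreducible
curves together with the (symmetric) intersection pairing, such that two
distinct irreducible curves intersect non-negatively. -/
structure CompleteSurface where
  Curve : Type
  pairing : Curve → Curve → ℤ
  pairing_symm : ∀ C D : Curve, pairing C D = pairing D C
  pairing_nonneg_of_ne : ∀ C D : Curve, C ≠ D → 0 ≤ pairing C D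

namespace CompleteSurface

/-- Intersection number of a `ℚ`-divisor with an irreducible curve. -/
def dotC (S : CompleteSurface) (A : S.Curve →₀ ℚ) (C : S.Curve) : ℚ :=
  A.sum fun c a => a * (S.pairing c C : ℚ)

/-- Intersection number of two `ℚ`-divisors. -/
def dot (S : CompleteSurface) (A B : S.Curve →₀ ℚ) : ℚ :=
  B.sum fun c b => b * S.dotC A c

/-- A `ℚ`-divisor is effective if all its coefficients are nonnegative. -/
def Effective (S : CompleteSurface) (A : S.Curve →₀ ℚ) : Prop := ∀ c, 0 ≤ A c

/-- The intersection matrix `Q(B)` of (the components of) `B` is negative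
definite: every nonzero divisor supported on the components of `B` has
negative self-intersection. -/
def NegDefOn (S : CompleteSurface) (B : S.Curve →₀ ℚ) : Prop :=
  ∀ T : S.Curve →₀ ℚ, T ≠ 0 → T.support ⊆ B.support → S.dot T T < 0

theorem dotC_add (S : CompleteSurface) (A B : S.Curve →₀ ℚ) (C : S.Curve) :
    S.dotC (A + B) C = S.dotC A C + S.dotC B C := by
  unfold dotC
  exact Finsupp.sum_add_index' (by simp) (by intros; ring)

theorem dotC_nonneg (S : CompleteSurface) (P : S.Curve →₀ ℚ)
    (hP : S.Effective P) (C : S.Curve) (hC : P C = 0) : 0 ≤ S.dotC P C := by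
  unfold dotC Finsupp.sum
  apply Finset.sum_nonneg
  intro d _
  by_cases hd : d = C
  · subst hd; simp [hC]
  · have h1 := hP d
    have h2 := S.pairing_nonneg_of_ne d C hd
    positivity

end CompleteSurface

/-- Lemma 2.2(i): if `Q(B)` is negative definite, `A·Bᵢ ≤ 0` for each
irreducible component `Bᵢ` of `B`, and `A + B` is effective, then `A` is
effective. -/
theorem effective_of_add_negdef (S : CompleteSurface) (A B : S.Curve →₀ ℚ)
    (hB : S.NegDefOn B) (hAB : ∀ C ∈ B.support, S.dotC A C ≤ 0)
    (heff : S.Effective (A + B)) : S.Effective A := by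
  -- negative part of A
  set N : S.Curve →₀ ℚ := A.mapRange (fun x => max (-x) 0) (by simp) with hN
  have hNval : ∀ c, N c = max (-(A c)) 0 := fun c => by
    simp [hN, Finsupp.mapRange_apply]
  have hNnonneg : ∀ c, 0 ≤ N c := fun c => by rw [hNval]; exact le_max_right _ _
  -- it suffices to show N = 0
  have key : N = 0 := by
    by_contra hne
    -- support of N is contained in support of B
    have hsupp : N.support ⊆ B.support := by
      intro c hc
      have hc' : N c ≠ 0 := Finsupp.mem_support_iff.mp hc
      have hA : A c < 0 := by
        by_contra h
        push_neg at h
        rw [hNval] at hc'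
        exact hc' (max_eq_right (by linarith))
      have := heff c
      simp only [Finsupp.add_apply] at this
      exact Finsupp.mem_support_iff.mpr (by linarith)
    -- P = A + N is effective and vanishes on supp N
    have hPeff : S.Effective (A + N) := by
      intro c
      simp only [Finsupp.add_apply, hNval]
      rcases le_or_gt 0 (A c) with h | h
      · have : 0 ≤ max (-(A c)) 0 := le_max_right _ _
        linarith
      · rw [max_eq_left (by linarith)]; linarith
    have hPzero : ∀ c ∈ N.support, (A + N) c = 0 := by
      intro c hc
      have hc' : N c ≠ 0 := Finsupp.mem_support_iff.mp hc
      have hA : A c < 0 := by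
        by_contra h
        push_neg at h
        rw [hNval] at hc'
        exact hc' (max_eq_right (by linarith))
      simp only [Finsupp.add_apply, hNval, max_eq_left (by linarith : (0:ℚ) ≤ -(A c))]
      ring
    -- dot N N ≥ 0
    have hdot : 0 ≤ S.dot N N := by
      unfold CompleteSurface.dot Finsupp.sum
      apply Finset.sum_nonneg
      intro c hc
      have h1 : 0 ≤ S.dotC (A + N) c := S.dotC_nonneg (A + N) hPeff c (hPzero c hc)
      have h2 : S.dotC A c ≤ 0 := hAB c (hsupp hc)
      have h3 : 0 ≤ S.dotC N c := by
        have := S.dotC_add A N c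
        linarith
      exact mul_nonneg (hNnonneg c) h3
    exact absurd (hB N hne hsupp) (not_lt.mpr hdot)
  intro c
  have := hNval c
  rw [key] at this
  simp only [Finsupp.coe_zero, Pi.zero_apply] at this
  by_contra h
  push_neg at h
  rw [max_eq_left (by linarith)] at this
  linarith
end

section
/- If A = [a_1,…,a_n] and B = [b_1,…,b_m] are adjoint chains of a columnar fiber (i.e. adjacent chains in a fiber A_n + … + A_1 + C + B_1 + … + B_m with C the unique (−1)-curve), then e(A) + e(B) = 1 and d(A) = d(B) = μ(C), where μ(C) is the multiplicity of C in the fiber. -/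
/-- `d([a₁,…,aₙ])`: determinant of the negative intersection matrix of a
rational chain, via the recursion `d([a₁,…,aₙ]) = a₁ d([a₂,…,aₙ]) − d([a₃,…,aₙ])`. -/
def chainDet : List ℤ → ℤ
  | [] => 1
  | [a] => a
  | a :: b :: l => a * chainDet (b :: l) - chainDet l

/-- `e(T) = d(T − T₁)/d(T)` for a chain `T`. -/
def eChain (l : List ℤ) : ℚ := (chainDet l.tail : ℚ) / chainDet l

/-- `Adjoint A B p q` says that `A` and `B` are the adjoint chains of a
columnar fiber `Aₙ + … + A₁ + C + B₁ + … + Bₘ` of a `ℙ¹`-ruling (produced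
from a smooth 0-curve by the Euclidean blowup algorithm: the fiber `[2,1,2]`
followed by repeated blowups at `C ∩ A₁` or `C ∩ B₁`), where the lists
record the numbers `−Aᵢ²` resp. `−Bᵢ²` starting from the components adjacent
to the unique `(−1)`-curve `C`, and `p = μ(A₁)`, `q = μ(B₁)` are the
multiplicities of the adjacent components, so that `μ(C) = p + q`. -/
inductive Adjoint : List ℤ → List ℤ → ℤ → ℤ → Prop
  | base : Adjoint [2] [2] 1 1
  | left (a : ℤ) (A B : List ℤ) (p q : ℤ) :
      Adjoint (a :: A) B p q → Adjoint ((a + 1) :: A) (2 :: B) p (p + q)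
  | right (b : ℤ) (A B : List ℤ) (p q : ℤ) :
      Adjoint A (b :: B) p q → Adjoint (2 :: A) ((b + 1) :: B) (p + q) q

/-!
Along the blowup algorithm the multiplicities `p = μ(A₁)`, `q = μ(B₁)` are exactly the
determinants of the chains with their first curve removed: `d(A − A₁) = p`, `d(B − B₁) = q`,
and `d(A) = d(B) = p + q`. Both recursions for `d` (raising the first entry, and prepending
a `2`) preserve this invariant, and then `e(A) + e(B) = (p + q)/(p + q) = 1`.
-/

theorem chainDet_succ_cons (a : ℤ) (A : List ℤ) :
    chainDet ((a + 1) :: A) = chainDet (a :: A) + chainDet A := by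
  cases A with
  | nil => rfl
  | cons b l => simp only [chainDet]; ring

theorem chainDet_cons_of_ne_nil (a : ℤ) {B : List ℤ} (hB : B ≠ []) :
    chainDet (a :: B) = a * chainDet B - chainDet B.tail := by
  obtain ⟨b, l, rfl⟩ := List.exists_cons_of_ne_nil hB
  rfl

theorem eChain_add_eChain_eq_one {A B : List ℤ} (hAB : chainDet A = chainDet B)
    (hA : chainDet A ≠ 0) (htail : chainDet A.tail + chainDet B.tail = chainDet A) :
    eChain A + eChain B = 1 := by
  have hA' : (chainDet A : ℚ) ≠ 0 := by exact_mod_cast hA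
  rw [eChain, eChain, ← hAB, ← add_div, div_eq_one_iff_eq hA']
  exact_mod_cast htail

namespace Adjoint

variable {A B : List ℤ} {p q : ℤ}

theorem fst_ne_nil (h : Adjoint A B p q) : A ≠ [] := by
  cases h <;> simp

theorem snd_ne_nil (h : Adjoint A B p q) : B ≠ [] := by
  cases h <;> simp

theorem pos (h : Adjoint A B p q) : 0 < p ∧ 0 < q := by
  induction h <;> omega

theorem chainDet_eq (h : Adjoint A B p q) :
    chainDet A = p + q ∧ chainDet A.tail = p ∧ chainDet B = p + q ∧ chainDet B.tail = q := by
  induction h with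
  | base => simp [chainDet]
  | left a A B p q h ih =>
    obtain ⟨hA, hAt, hB, hBt⟩ := ih
    simp only [List.tail_cons] at hAt
    rw [chainDet_succ_cons, chainDet_cons_of_ne_nil 2 h.snd_ne_nil]
    simp only [List.tail_cons]
    refine ⟨?_, ?_, ?_, ?_⟩ <;> linarith
  | right b A B p q h ih =>
    obtain ⟨hA, hAt, hB, hBt⟩ := ih
    simp only [List.tail_cons] at hBt
    rw [chainDet_succ_cons, chainDet_cons_of_ne_nil 2 h.fst_ne_nil]
    simp only [List.tail_cons]
    refine ⟨?_, ?_, ?_, ?_⟩ <;> linarith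

end Adjoint

/-- For adjoint chains `A`, `B` of a columnar fiber with unique `(−1)`-curve
`C` of multiplicity `μ(C)`: `e(A) + e(B) = 1` and `d(A) = d(B) = μ(C)`. -/
theorem adjoint_chains (A B : List ℤ) (p q : ℤ) (h : Adjoint A B p q) :
    eChain A + eChain B = 1 ∧ chainDet A = chainDet B ∧ chainDet A = p + q := by
  obtain ⟨hA, hAt, hB, hBt⟩ := h.chainDet_eq
  obtain ⟨hp, hq⟩ := h.pos
  exact ⟨eChain_add_eChain_eq_one (by omega) (by omega) (by omega), by omega, hA⟩
end

section
/- Let F be a singular fiber of a P^1-ruling of a smooth complete surface with a unique (−1)-curve C. Then the multiplicity μ(C) of C in F is greater than 1, and there are exactly two components of F of multiplicity one; they are tips of the fiber. -/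
/-- A configuration of curves in a fiber of a `ℙ¹`-ruling: a finite set of
components (labelled by naturals), the incidence relation, the
self-intersection `w` and the multiplicity `μ` of each component. -/
structure Config where
  V : Finset ℕ
  adj : ℕ → ℕ → Bool
  w : ℕ → ℤ
  μ : ℕ → ℕ

namespace Config

/-- Blowup at a point lying on the single component `c`: a new component `v`
with self-intersection `−1` and multiplicity `μ(c)` appears, `c² ↦ c² − 1`. -/
def blowupFree (F : Config) (c v : ℕ) : Config where
  V := insert v F.V
  adj := fun x y =>
    F.adj x y || (x == c && y == v) || (x == v && y == c)
  w := Function.update (Function.update F.w c (F.w c - 1)) v (-1)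
  μ := Function.update F.μ v (F.μ c)

/-- Blowup at the intersection point of the components `c` and `c'`: a new
component `v` of self-intersection `−1` and multiplicity `μ(c) + μ(c')`
separates `c` and `c'`, and `c² ↦ c² − 1`, `c'² ↦ c'² − 1`. -/
def blowupCross (F : Config) (c c' v : ℕ) : Config where
  V := insert v F.V
  adj := fun x y =>
    (F.adj x y && !((x == c && y == c') || (x == c' && y == c)))
      || (x == c && y == v) || (x == v && y == c)
      || (x == c' && y == v) || (x == v && y == c')
  w := Function.update (Function.update (Function.update F.w c (F.w c - 1))
        c' (F.w c' - 1)) v (-1)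
  μ := Function.update F.μ v (F.μ c + F.μ c')

/-- Fibers of a `ℙ¹`-ruling of a smooth complete surface: every fiber is
produced from a smooth 0-curve (of multiplicity one) by a sequence of
blowups. -/
inductive IsFiber : Config → Prop
  | base : IsFiber ⟨{0}, fun _ _ => false, fun _ => 0, fun _ => 1⟩
  | free (F : Config) (c v : ℕ) : IsFiber F → c ∈ F.V → v ∉ F.V →
      IsFiber (F.blowupFree c v)
  | cross (F : Config) (c c' v : ℕ) : IsFiber F → c ∈ F.V → c' ∈ F.V →
      F.adj c c' = true → v ∉ F.V → IsFiber (F.blowupCross c c' v)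

end Config

/-!
Induct along the sequence of blowups. The exceptional curve of the last blowup is a (−1)-curve,
so if `C` is the only one, `C` is that curve, and every (−1)-curve of the previous fiber passed
through the blown-up point. Every fiber other than the 0-curve has a (−1)-curve and only negative
components, and blowing up the 0-curve yields two (−1)-curves. Hence either the previous fiber had
a unique (−1)-curve `C'` through the point, so that by induction `μ(C) ≥ μ(C') ≥ 2`, and the
components of multiplicity one keep their valencies (the only one that can pass through the point
is the other component there, which trades its neighbour `C'` for `C`); or it had two adjacent
(−1)-curves. The latter only happens for the 0-curve blown up once, the chain of multiplicities
`[1, 1]`, whose blowup at the node is the chain `[1, 2, 1]`.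
-/

namespace Config

variable {F : Config} {a b c v x y : ℕ}

def zeroCurve : Config := ⟨{0}, fun _ _ => false, fun _ => 0, fun _ => 1⟩

def neighbors (F : Config) (x : ℕ) : Finset ℕ := F.V.filter fun u => F.adj x u = true

def IsUniqueMinusOneCurve (F : Config) (c : ℕ) : Prop :=
  c ∈ F.V ∧ F.w c = -1 ∧ ∀ x ∈ F.V, F.w x = -1 → x = c

def HasTwoReducedTips (F : Config) : Prop :=
  (F.V.filter fun u => F.μ u = 1).card = 2 ∧
    ∀ u ∈ F.V, F.μ u = 1 → (F.neighbors u).card ≤ 1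

section blowupFree

@[simp] lemma blowupFree_V : (F.blowupFree c v).V = insert v F.V := rfl

@[simp] lemma blowupFree_adj : (F.blowupFree c v).adj x y = true ↔
    F.adj x y = true ∨ x = c ∧ y = v ∨ x = v ∧ y = c := by
  simp [blowupFree, or_assoc]

@[simp] lemma blowupFree_w_self : (F.blowupFree c v).w v = -1 := by
  simp [blowupFree]

lemma blowupFree_w_center (hcv : c ≠ v) : (F.blowupFree c v).w c = F.w c - 1 := by
  simp [blowupFree, hcv]

lemma blowupFree_w_of_ne (hxv : x ≠ v) (hxc : x ≠ c) : (F.blowupFree c v).w x = F.w x := by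
  simp [blowupFree, hxv, hxc]

@[simp] lemma blowupFree_μ_self : (F.blowupFree c v).μ v = F.μ c := by
  simp [blowupFree]

lemma blowupFree_μ_of_ne (hxv : x ≠ v) : (F.blowupFree c v).μ x = F.μ x := by
  simp [blowupFree, hxv]

lemma neighbors_blowupFree_of_ne (hmem : ∀ y, F.adj x y = true → y ∈ F.V)
    (hxc : x ≠ c) (hxv : x ≠ v) : (F.blowupFree c v).neighbors x = F.neighbors x := by
  ext y
  simp only [neighbors, Finset.mem_filter, blowupFree_V, Finset.mem_insert, blowupFree_adj, hxc,
    hxv, false_and, or_false]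
  exact ⟨fun h => ⟨hmem y h.2, h.2⟩, fun h => ⟨Or.inr h.1, h.2⟩⟩

end blowupFree

section blowupCross

@[simp] lemma blowupCross_V : (F.blowupCross a b v).V = insert v F.V := rfl

@[simp] lemma blowupCross_adj : (F.blowupCross a b v).adj x y = true ↔
    F.adj x y = true ∧ ¬(x = a ∧ y = b ∨ x = b ∧ y = a) ∨
      x = a ∧ y = v ∨ x = v ∧ y = a ∨ x = b ∧ y = v ∨ x = v ∧ y = b := by
  simp only [blowupCross, Bool.or_eq_true, Bool.and_eq_true, Bool.not_eq_true', beq_iff_eq,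
    Bool.or_eq_false_iff, Bool.and_eq_false_iff, beq_eq_false_iff_ne, or_assoc]
  tauto

@[simp] lemma blowupCross_w_self : (F.blowupCross a b v).w v = -1 := by
  simp [blowupCross]

lemma blowupCross_w_left (hab : a ≠ b) (hav : a ≠ v) :
    (F.blowupCross a b v).w a = F.w a - 1 := by
  simp [blowupCross, hab, hav]

lemma blowupCross_w_of_ne (hxv : x ≠ v) (hxa : x ≠ a) (hxb : x ≠ b) :
    (F.blowupCross a b v).w x = F.w x := by
  simp [blowupCross, hxv, hxa, hxb]

@[simp] lemma blowupCross_μ_self : (F.blowupCross a b v).μ v = F.μ a + F.μ b := by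
  simp [blowupCross]

lemma blowupCross_μ_of_ne (hxv : x ≠ v) : (F.blowupCross a b v).μ x = F.μ x := by
  simp [blowupCross, hxv]

lemma blowupCross_comm (hab : a ≠ b) : F.blowupCross a b v = F.blowupCross b a v := by
  simp only [blowupCross, Function.update_comm hab, Nat.add_comm (F.μ a), Config.mk.injEq,
    true_and, and_true]
  funext x y
  cases F.adj x y <;> simp only [Bool.or_comm, Bool.or_left_comm]

lemma blowupCross_w_right (hab : a ≠ b) (hbv : b ≠ v) :
    (F.blowupCross a b v).w b = F.w b - 1 := by
  rw [blowupCross_comm hab, blowupCross_w_left hab.symm hbv]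

lemma neighbors_blowupCross_left (hab : a ≠ b) (hav : a ≠ v) :
    (F.blowupCross a b v).neighbors a = insert v ((F.neighbors a).erase b) := by
  ext y
  simp only [neighbors, Finset.mem_filter, blowupCross_V, Finset.mem_insert, Finset.mem_erase,
    blowupCross_adj, true_and, hav, hab, false_and, or_false]
  tauto

lemma neighbors_blowupCross_of_ne (hmem : ∀ y, F.adj x y = true → y ∈ F.V)
    (hxa : x ≠ a) (hxb : x ≠ b) (hxv : x ≠ v) :
    (F.blowupCross a b v).neighbors x = F.neighbors x := by
  ext y
  simp only [neighbors, Finset.mem_filter, blowupCross_V, Finset.mem_insert, blowupCross_adj, hxa,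
    hxb, hxv, false_and, or_false, not_false_eq_true, and_true]
  exact ⟨fun h => ⟨hmem y h.2, h.2⟩, fun h => ⟨Or.inr h.1, h.2⟩⟩

end blowupCross

namespace IsFiber

theorem adj_comm (hF : F.IsFiber) (x y : ℕ) : F.adj x y = F.adj y x := by
  induction hF with
  | base => rfl
  | free F c v _ _ _ ih =>
    rw [Bool.eq_iff_iff, blowupFree_adj, blowupFree_adj, ih]
    tauto
  | cross F a b v _ _ _ _ _ ih =>
    rw [Bool.eq_iff_iff, blowupCross_adj, blowupCross_adj, ih]
    tauto

theorem mem_of_adj (hF : F.IsFiber) (h : F.adj x y = true) : y ∈ F.V := by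
  induction hF generalizing x y with
  | base => simp at h
  | free F c v _ hc _ ih =>
    rcases blowupFree_adj.mp h with h | ⟨-, rfl⟩ | ⟨-, rfl⟩
    · exact Finset.mem_insert_of_mem (ih h)
    · exact Finset.mem_insert_self _ _
    · exact Finset.mem_insert_of_mem hc
  | cross F a b v _ ha hb _ _ ih =>
    rcases blowupCross_adj.mp h with
      ⟨h, -⟩ | ⟨-, rfl⟩ | ⟨-, rfl⟩ | ⟨-, rfl⟩ | ⟨-, rfl⟩
    · exact Finset.mem_insert_of_mem (ih h)
    · exact Finset.mem_insert_self _ _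
    · exact Finset.mem_insert_of_mem ha
    · exact Finset.mem_insert_self _ _
    · exact Finset.mem_insert_of_mem hb

theorem mem_of_adj_left (hF : F.IsFiber) (h : F.adj x y = true) : x ∈ F.V :=
  hF.mem_of_adj ((hF.adj_comm y x).trans h)

theorem adj_self (hF : F.IsFiber) (x : ℕ) : F.adj x x = false := by
  induction hF with
  | base => rfl
  | free F c v _ hc hv ih =>
    have hcv : c ≠ v := ne_of_mem_of_not_mem hc hv
    simp only [Bool.eq_false_iff, ne_eq, blowupFree_adj, ih, Bool.false_eq_true, false_or]
    rintro (⟨rfl, rfl⟩ | ⟨rfl, rfl⟩) <;> exact hcv rfl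
  | cross F a b v _ ha hb _ hv ih =>
    have hav : a ≠ v := ne_of_mem_of_not_mem ha hv
    have hbv : b ≠ v := ne_of_mem_of_not_mem hb hv
    simp only [Bool.eq_false_iff, ne_eq, blowupCross_adj, ih, Bool.false_eq_true, false_and,
      false_or]
    rintro (⟨rfl, rfl⟩ | ⟨rfl, rfl⟩ | ⟨rfl, rfl⟩ | ⟨rfl, rfl⟩) <;> simp_all

theorem ne_of_adj (hF : F.IsFiber) (h : F.adj x y = true) : x ≠ y := by
  rintro rfl
  simp [hF.adj_self] at h

theorem neighbors_subset_erase (hF : F.IsFiber) : F.neighbors x ⊆ F.V.erase x := by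
  intro y hy
  rw [neighbors, Finset.mem_filter] at hy
  exact Finset.mem_erase.mpr ⟨(hF.ne_of_adj hy.2).symm, hy.1⟩

theorem eq_zeroCurve_or (hF : F.IsFiber) :
    F = zeroCurve ∨ (∀ x ∈ F.V, F.w x ≤ -1) ∧ ∃ x ∈ F.V, F.w x = -1 := by
  induction hF with
  | base => exact Or.inl rfl
  | free F c v _ hc hv ih =>
    refine Or.inr ⟨fun x hx => ?_, v, Finset.mem_insert_self _ _, blowupFree_w_self⟩
    have hcv : c ≠ v := ne_of_mem_of_not_mem hc hv
    rcases Finset.mem_insert.mp hx with rfl | hxF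
    · simp
    rcases ih with rfl | ⟨hneg, -⟩
    · obtain rfl : x = c := (Finset.mem_singleton.mp hxF).trans (Finset.mem_singleton.mp hc).symm
      simp [blowupFree_w_center hcv, zeroCurve]
    rcases eq_or_ne x c with rfl | hxc
    · linarith [blowupFree_w_center (F := F) hcv, hneg x hxF]
    · rw [blowupFree_w_of_ne (ne_of_mem_of_not_mem hxF hv) hxc]
      exact hneg x hxF
  | cross F a b v hF ha hb hadj hv ih =>
    refine Or.inr ⟨fun x hx => ?_, v, Finset.mem_insert_self _ _, blowupCross_w_self⟩
    rcases ih with rfl | ⟨hneg, -⟩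
    · simp [zeroCurve] at hadj
    have hab : a ≠ b := hF.ne_of_adj hadj
    rcases Finset.mem_insert.mp hx with rfl | hxF
    · simp
    rcases eq_or_ne x a with rfl | hxa
    · linarith [blowupCross_w_left (F := F) hab (ne_of_mem_of_not_mem ha hv), hneg x hxF]
    rcases eq_or_ne x b with rfl | hxb
    · linarith [blowupCross_w_right (F := F) hab (ne_of_mem_of_not_mem hb hv), hneg x hxF]
    · rw [blowupCross_w_of_ne (ne_of_mem_of_not_mem hxF hv) hxa hxb]
      exact hneg x hxF

end IsFiber

def AdjMinusOneCurvesSpan (F : Config) : Prop :=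
  ∀ ⦃x y⦄, F.adj x y = true → F.w x = -1 → F.w y = -1 →
    F.V = {x, y} ∧ F.μ x = 1 ∧ F.μ y = 1

lemma AdjMinusOneCurvesSpan.blowupFree (hF : F.IsFiber) (hc : c ∈ F.V) (hv : v ∉ F.V)
    (h : F.AdjMinusOneCurvesSpan) : (F.blowupFree c v).AdjMinusOneCurvesSpan := by
  intro x y hxy hx hy
  have hcv : c ≠ v := ne_of_mem_of_not_mem hc hv
  have hzero (hc0 : (F.blowupFree c v).w c = -1) : (F.blowupFree c v).V = {c, v} ∧
      (F.blowupFree c v).μ c = 1 ∧ (F.blowupFree c v).μ v = 1 := by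
    rcases hF.eq_zeroCurve_or with rfl | ⟨hneg, -⟩
    · obtain rfl := Finset.mem_singleton.mp hc
      simp [zeroCurve, blowupFree_μ_of_ne hcv, Finset.pair_comm]
    · linarith [hneg c hc, blowupFree_w_center (F := F) hcv]
  rcases blowupFree_adj.mp hxy with hxy | ⟨rfl, rfl⟩ | ⟨rfl, rfl⟩
  · exfalso
    rcases hF.eq_zeroCurve_or with rfl | ⟨hneg, -⟩
    · simp [zeroCurve] at hxy
    have hprev (z : ℕ) (hz : z ∈ F.V) (hzw : (F.blowupFree c v).w z = -1) :
        z ≠ c ∧ F.w z = -1 := by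
      rcases eq_or_ne z c with rfl | hzc
      · linarith [hneg z hz, blowupFree_w_center (F := F) hcv]
      · exact ⟨hzc, (blowupFree_w_of_ne (ne_of_mem_of_not_mem hz hv) hzc).symm.trans hzw⟩
    obtain ⟨hxc, hx⟩ := hprev x (hF.mem_of_adj_left hxy) hx
    obtain ⟨hyc, hy⟩ := hprev y (hF.mem_of_adj hxy) hy
    have hc' := (h hxy hx hy).1 ▸ hc
    simp only [Finset.mem_insert, Finset.mem_singleton] at hc'
    exact hc'.elim hxc.symm hyc.symm
  · exact hzero hx
  · obtain ⟨hV, hc1, hv1⟩ := hzero hy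
    exact ⟨hV.trans (Finset.pair_comm _ _), hv1, hc1⟩

lemma AdjMinusOneCurvesSpan.blowupCross (hF : F.IsFiber) (hadj : F.adj a b = true)
    (hv : v ∉ F.V) (h : F.AdjMinusOneCurvesSpan) :
    (F.blowupCross a b v).AdjMinusOneCurvesSpan := by
  intro x y hxy hx hy
  exfalso
  -- `a` and `b` drop to self-intersection `≤ -2`, so the pair already consists of adjacent
  -- (−1)-curves of `F`; these span `F`, which contains `a`.
  rcases hF.eq_zeroCurve_or with rfl | ⟨hneg, -⟩
  · simp [zeroCurve] at hadj
  have hab := hF.ne_of_adj hadj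
  have ha := hF.mem_of_adj_left hadj
  have hb := hF.mem_of_adj hadj
  have hwa : (F.blowupCross a b v).w a ≠ -1 := by
    linarith [hneg a ha, blowupCross_w_left (F := F) hab (ne_of_mem_of_not_mem ha hv)]
  have hwb : (F.blowupCross a b v).w b ≠ -1 := by
    linarith [hneg b hb, blowupCross_w_right (F := F) hab (ne_of_mem_of_not_mem hb hv)]
  rcases blowupCross_adj.mp hxy with
    ⟨hxy, -⟩ | ⟨rfl, -⟩ | ⟨-, rfl⟩ | ⟨rfl, -⟩ | ⟨-, rfl⟩
  · have hprev (z : ℕ) (hz : z ∈ F.V) (hzw : (F.blowupCross a b v).w z = -1) :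
        z ≠ a ∧ F.w z = -1 := by
      have hza : z ≠ a := by rintro rfl; exact hwa hzw
      have hzb : z ≠ b := by rintro rfl; exact hwb hzw
      exact ⟨hza, (blowupCross_w_of_ne (ne_of_mem_of_not_mem hz hv) hza hzb).symm.trans hzw⟩
    obtain ⟨hxa, hx⟩ := hprev x (hF.mem_of_adj_left hxy) hx
    obtain ⟨hya, hy⟩ := hprev y (hF.mem_of_adj hxy) hy
    have ha' := (h hxy hx hy).1 ▸ ha
    simp only [Finset.mem_insert, Finset.mem_singleton] at ha'
    exact ha'.elim hxa.symm hya.symm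
  · exact hwa hx
  · exact hwa hy
  · exact hwb hx
  · exact hwb hy

theorem IsFiber.adjMinusOneCurvesSpan (hF : F.IsFiber) : F.AdjMinusOneCurvesSpan := by
  induction hF with
  | base => intro x y hxy; simp at hxy
  | free F c v hF hc hv ih => exact ih.blowupFree hF hc hv
  | cross F a b v hF _ _ hadj hv ih => exact ih.blowupCross hF hadj hv

lemma hasTwoReducedTips_of_eq_pair (hF : F.IsFiber) (hV : F.V = {a, b}) (hab : a ≠ b)
    (ha : F.μ a = 1) (hb : F.μ b = 1) : F.HasTwoReducedTips := by
  refine ⟨?_, fun u hu _ => ?_⟩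
  · rw [Finset.filter_true_of_mem, hV, Finset.card_pair hab]
    intro u hu
    rw [hV, Finset.mem_insert, Finset.mem_singleton] at hu
    rcases hu with rfl | rfl <;> assumption
  · calc (F.neighbors u).card ≤ (F.V.erase u).card :=
          Finset.card_le_card hF.neighbors_subset_erase
      _ = 1 := by rw [Finset.card_erase_of_mem hu, hV, Finset.card_pair hab]

lemma hasTwoReducedTips_of_insert {G : Config} (hGV : G.V = insert v F.V) (hv : v ∉ F.V)
    (hGv : G.μ v ≠ 1) (hGμ : ∀ u ∈ F.V, G.μ u = F.μ u)
    (hcard : (F.V.filter fun u => F.μ u = 1).card = 2)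
    (htips : ∀ u ∈ F.V, F.μ u = 1 → (G.neighbors u).card ≤ 1) : G.HasTwoReducedTips := by
  refine ⟨?_, fun u hu hu1 => ?_⟩
  · rwa [hGV, Finset.filter_insert, if_neg hGv, Finset.filter_congr fun u hu => by rw [hGμ u hu]]
  · rw [hGV, Finset.mem_insert] at hu
    rcases hu with rfl | hu
    · exact absurd hu1 hGv
    · exact htips u hu (hGμ u hu ▸ hu1)

lemma HasTwoReducedTips.blowupFree (hF : F.IsFiber) (hv : v ∉ F.V) (hc : 1 < F.μ c)
    (h : F.HasTwoReducedTips) : (F.blowupFree c v).HasTwoReducedTips := by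
  refine hasTwoReducedTips_of_insert rfl hv (by rw [blowupFree_μ_self]; omega)
    (fun u hu => blowupFree_μ_of_ne (ne_of_mem_of_not_mem hu hv)) h.1 fun u hu hu1 => ?_
  have huc : u ≠ c := by rintro rfl; omega
  rw [neighbors_blowupFree_of_ne (fun _ => hF.mem_of_adj) huc (ne_of_mem_of_not_mem hu hv)]
  exact h.2 u hu hu1

lemma card_neighbors_blowupCross_left_le (hF : F.IsFiber) (hadj : F.adj a b = true)
    (hv : v ∉ F.V) :
    ((F.blowupCross a b v).neighbors a).card ≤ (F.neighbors a).card := by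
  have hav := ne_of_mem_of_not_mem (hF.mem_of_adj_left hadj) hv
  rw [neighbors_blowupCross_left (hF.ne_of_adj hadj) hav]
  calc _ ≤ ((F.neighbors a).erase b).card + 1 := Finset.card_insert_le _ _
    _ = (F.neighbors a).card :=
      Finset.card_erase_add_one (Finset.mem_filter.mpr ⟨hF.mem_of_adj hadj, hadj⟩)

lemma card_neighbors_blowupCross_le (hF : F.IsFiber) (hadj : F.adj a b = true) (hv : v ∉ F.V)
    (hx : x ∈ F.V) : ((F.blowupCross a b v).neighbors x).card ≤ (F.neighbors x).card := by
  rcases eq_or_ne x a with rfl | hxa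
  · exact card_neighbors_blowupCross_left_le hF hadj hv
  rcases eq_or_ne x b with rfl | hxb
  · rw [blowupCross_comm (hF.ne_of_adj hadj)]
    exact card_neighbors_blowupCross_left_le hF ((hF.adj_comm _ _).trans hadj) hv
  rw [neighbors_blowupCross_of_ne (fun _ => hF.mem_of_adj) hxa hxb (ne_of_mem_of_not_mem hx hv)]

lemma HasTwoReducedTips.blowupCross (hF : F.IsFiber) (hadj : F.adj a b = true) (hv : v ∉ F.V)
    (hab : 1 < F.μ a + F.μ b) (h : F.HasTwoReducedTips) :
    (F.blowupCross a b v).HasTwoReducedTips :=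
  hasTwoReducedTips_of_insert rfl hv (by rw [blowupCross_μ_self]; omega)
    (fun u hu => blowupCross_μ_of_ne (ne_of_mem_of_not_mem hu hv)) h.1 fun u hu hu1 =>
      (card_neighbors_blowupCross_le hF hadj hv hu).trans (h.2 u hu hu1)

lemma isUniqueMinusOneCurve_of_blowupFree (hF : F.IsFiber) (hc : c ∈ F.V) (hv : v ∉ F.V)
    (h : (F.blowupFree c v).IsUniqueMinusOneCurve v) : F.IsUniqueMinusOneCurve c := by
  have hcv := ne_of_mem_of_not_mem hc hv
  have hother (x : ℕ) (hx : x ∈ F.V) (hw : F.w x = -1) : x = c := by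
    by_contra hxc
    have hxv := ne_of_mem_of_not_mem hx hv
    exact hxv (h.2.2 x (Finset.mem_insert_of_mem hx) ((blowupFree_w_of_ne hxv hxc).trans hw))
  rcases hF.eq_zeroCurve_or with rfl | ⟨-, x, hx, hxw⟩
  · refine absurd (h.2.2 c (Finset.mem_insert_of_mem hc) ?_) hcv
    simp [blowupFree_w_center hcv, zeroCurve]
  · obtain rfl := hother x hx hxw
    exact ⟨hx, hxw, hother⟩

lemma isUniqueMinusOneCurve_of_blowupCross (hF : F.IsFiber) (hadj : F.adj a b = true)
    (hv : v ∉ F.V) (h : (F.blowupCross a b v).IsUniqueMinusOneCurve v) :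
    F.IsUniqueMinusOneCurve a ∨ F.IsUniqueMinusOneCurve b ∨ F.w a = -1 ∧ F.w b = -1 := by
  have hother (x : ℕ) (hx : x ∈ F.V) (hw : F.w x = -1) : x = a ∨ x = b := by
    by_contra! ⟨hxa, hxb⟩
    have hxv := ne_of_mem_of_not_mem hx hv
    exact hxv (h.2.2 x (Finset.mem_insert_of_mem hx) ((blowupCross_w_of_ne hxv hxa hxb).trans hw))
  rcases hF.eq_zeroCurve_or with rfl | ⟨-, x, hx, hxw⟩
  · simp [zeroCurve] at hadj
  have ha := hF.mem_of_adj_left hadj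
  have hb := hF.mem_of_adj hadj
  by_cases hwa : F.w a = -1 <;> by_cases hwb : F.w b = -1
  · exact Or.inr (Or.inr ⟨hwa, hwb⟩)
  · refine Or.inl ⟨ha, hwa, fun y hy hyw => (hother y hy hyw).resolve_right ?_⟩
    rintro rfl
    exact hwb hyw
  · refine Or.inr (Or.inl ⟨hb, hwb, fun y hy hyw => (hother y hy hyw).resolve_left ?_⟩)
    rintro rfl
    exact hwa hyw
  · rcases hother x hx hxw with rfl | rfl
    exacts [absurd hxw hwa, absurd hxw hwb]

theorem IsFiber.one_lt_μ_and_hasTwoReducedTips (hF : F.IsFiber)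
    (hc : F.IsUniqueMinusOneCurve c) : 1 < F.μ c ∧ F.HasTwoReducedTips := by
  induction hF generalizing c with
  | base => simp [IsUniqueMinusOneCurve] at hc
  | free F c₀ v hF hc₀ hv ih =>
    obtain rfl : v = c := hc.2.2 v (Finset.mem_insert_self _ _) blowupFree_w_self
    obtain ⟨hμ, htips⟩ := ih (isUniqueMinusOneCurve_of_blowupFree hF hc₀ hv hc)
    exact ⟨by rwa [blowupFree_μ_self], htips.blowupFree hF hv hμ⟩
  | cross F a b v hF _ _ hadj hv ih =>
    obtain rfl : v = c := hc.2.2 v (Finset.mem_insert_self _ _) blowupCross_w_self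
    have key : 1 < F.μ a + F.μ b ∧ F.HasTwoReducedTips := by
      rcases isUniqueMinusOneCurve_of_blowupCross hF hadj hv hc with ha | hb | ⟨hwa, hwb⟩
      · exact (ih ha).imp (by omega) id
      · exact (ih hb).imp (by omega) id
      · obtain ⟨hV, ha1, hb1⟩ := hF.adjMinusOneCurvesSpan hadj hwa hwb
        exact ⟨by omega, hasTwoReducedTips_of_eq_pair hF hV (hF.ne_of_adj hadj) ha1 hb1⟩
    exact ⟨by rw [blowupCross_μ_self]; exact key.1, key.2.blowupCross hF hadj hv key.1⟩

end Config

theorem unique_minus_one_curve_fiber_general (F : Config) (hF : Config.IsFiber F)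
    (c : ℕ) (hc : c ∈ F.V) (hcw : F.w c = -1)
    (huniq : ∀ c' ∈ F.V, F.w c' = -1 → c' = c) :
    1 < F.μ c ∧
      (F.V.filter fun v => F.μ v = 1).card = 2 ∧
      (∀ v ∈ F.V, F.μ v = 1 → (F.V.filter fun u => F.adj v u = true).card ≤ 1) :=
  hF.one_lt_μ_and_hasTwoReducedTips ⟨hc, hcw, huniq⟩

/-- Lemma 2.7(v): if a singular fiber `F` of a `ℙ¹`-ruling has a unique
`(−1)`-curve `C`, then `μ(C) > 1`, and there are exactly two components of
`F` of multiplicity one; they are tips of the fiber (they meet at most one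
other component). -/
theorem unique_minus_one_curve_fiber (F : Config) (hF : Config.IsFiber F)
    (hsing : 2 ≤ F.V.card)
    (c : ℕ) (hc : c ∈ F.V) (hcw : F.w c = -1)
    (huniq : ∀ c' ∈ F.V, F.w c' = -1 → c' = c) :
    1 < F.μ c ∧
      (F.V.filter fun v => F.μ v = 1).card = 2 ∧
      (∀ v ∈ F.V, F.μ v = 1 → (F.V.filter fun u => F.adj v u = true).card ≤ 1) :=
  unique_minus_one_curve_fiber_general F hF c hc hcw huniq
end

section
/- Let D = D_h + E_h + D_1 + … + D_n + E_1 + … + E_n be the boundary-plus-exceptional configuration of the non-extendable C*-ruling construction, where E_h^2 = −N, the E_i, D_i are adjoint admissible chains of columnar fibers with ẽ(E_i) = ẽ_i. Then d(E_1 + … + E_n + E_h) = d(E_1)⋯d(E_n)·(N − Σ_{i=1}^n ẽ_i), so the intersection matrix of E is negative definite if and only if Σ ẽ_i < N. -/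
/-- `ẽ(E) = d(E minus the component meeting the central curve)/d(E)` for a
chain `E` listed starting from the component meeting the central curve. -/
def eTilde (l : List ℤ) : ℚ := (chainDet l.tail : ℚ) / chainDet l

/-- The negative intersection matrix of the configuration
`E = E₁ + … + Eₙ + E_h`, where `E_h` is a curve with `E_h² = −N` meeting the
first component of each chain `Eᵢ` once (the chain `Eᵢ` is recorded by the
list `L i` of the numbers `−C²` of its components). The index `none` stands
for `E_h`. -/
def configMatrix (n : ℕ) (N : ℤ) (L : Fin n → List ℤ) :
    Matrix (Option ((i : Fin n) × Fin (L i).length))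
      (Option ((i : Fin n) × Fin (L i).length)) ℚ :=
  fun x y =>
    match x, y with
    | none, none => (N : ℚ)
    | none, some ⟨_, j⟩ => if (j : ℕ) = 0 then -1 else 0
    | some ⟨_, j⟩, none => if (j : ℕ) = 0 then -1 else 0
    | some ⟨i, j⟩, some ⟨i', j'⟩ =>
      if i = i' then
        (if (j : ℕ) = (j' : ℕ) then ((L i).get j : ℚ)
         else if (j : ℕ) + 1 = (j' : ℕ) ∨ (j' : ℕ) + 1 = (j : ℕ) then -1 else 0)
      else 0

/-!
The configuration matrix is the block-diagonal matrix `D` of the chain matrices, bordered by the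
row and column of `E_h`. Bordering a positive definite `A` by a row and column `(c, b)` keeps it
positive definite iff the Schur complement `c - bᵀA⁻¹b` is positive, and multiplies the
determinant by that complement. For a chain matrix, Cramer's rule identifies the first diagonal
entry of the inverse with `ẽ`; since `ẽ < 1` for an admissible chain, induction on the chain
shows that admissible chain matrices are positive definite. Hence `D` is positive definite and
its Schur complement in the configuration matrix is `N - Σᵢ ẽ(Eᵢ)`, which gives both claims.
-/

namespace Matrix

variable {m n R K : Type*}

theorem posDef_fromBlocks₁₁_iff [Fintype m] [Fintype n] [CommRing R] [PartialOrder R]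
    [StarRing R] [StarOrderedRing R] [DecidableEq m] {A : Matrix m m R} (B : Matrix m n R)
    (D : Matrix n n R) (hA : A.PosDef) [Invertible A] :
    (fromBlocks A B Bᴴ D).PosDef ↔ (D - Bᴴ * A⁻¹ * B).PosDef := by
  rw [posDef_iff_dotProduct_mulVec, posDef_iff_dotProduct_mulVec,
    IsHermitian.fromBlocks₁₁ _ _ hA.1]
  refine and_congr_right fun _ => ⟨fun h y hy => ?_, fun h v hv => ?_⟩
  · have hpos := h (x := Sum.elim (-((A⁻¹ * B) *ᵥ y)) y) fun h0 => hy (by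
      simpa using congrArg (· ∘ Sum.inr) h0)
    rwa [dotProduct_mulVec, schur_complement_eq₁₁ B D _ _ hA.1, neg_add_cancel, dotProduct_zero,
      zero_add, ← dotProduct_mulVec] at hpos
  · rw [dotProduct_mulVec, ← Sum.elim_comp_inl_inr v, schur_complement_eq₁₁ B D _ _ hA.1,
      ← dotProduct_mulVec, ← dotProduct_mulVec]
    by_cases hy : v ∘ Sum.inr = 0
    · have hx : v ∘ Sum.inl ≠ 0 := fun hx => hv (by
        rw [← Sum.elim_comp_inl_inr v, hx, hy]; ext (_ | _) <;> rfl)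
      simpa [hy] using hA.dotProduct_mulVec_pos hx
    · exact add_pos_of_nonneg_of_pos (hA.posSemidef.dotProduct_mulVec_nonneg _) (h hy)

theorem posDef_submatrix_equiv [Ring R] [PartialOrder R] [StarRing R] {M : Matrix n n R}
    (e : m ≃ n) : (M.submatrix e e).PosDef ↔ M.PosDef :=
  ⟨fun h => by simpa using h.submatrix e.symm.injective, fun h => h.submatrix e.injective⟩

theorem posDef_unique_iff [CommRing K] [PartialOrder K] [StarRing K] [StarOrderedRing K]
    [NoZeroDivisors K] [Nontrivial K] [Unique n] {M : Matrix n n K} :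
    M.PosDef ↔ 0 < M default default := by
  have hM : M = diagonal fun _ => M default default := by
    ext i j
    rw [Subsingleton.elim i default, Subsingleton.elim j default, diagonal_apply_eq]
  rw [hM, posDef_diagonal_iff]
  simp

theorem IsHermitian.posDef_iff_dotProduct_mulVec_pos [Fintype n] [CommRing K] [PartialOrder K]
    [StarRing K] [TrivialStar K] {M : Matrix n n K} (hM : M.IsHermitian) :
    M.PosDef ↔ ∀ x ≠ 0, 0 < x ⬝ᵥ M *ᵥ x := by
  simp only [posDef_iff_dotProduct_mulVec, star_trivial]
  exact and_iff_right hM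

section Bordered

variable {ι : Type*}

def bordered (A : Matrix ι ι K) (b : ι → K) (c : K) : Matrix (Option ι) (Option ι) K :=
  fun x y =>
    match x, y with
    | none, none => c
    | none, some j => b j
    | some i, none => b i
    | some i, some j => A i j

theorem bordered_eq_submatrix_fromBlocks (A : Matrix ι ι K) (b : ι → K) (c : K) :
    bordered A b c =
      (fromBlocks A (replicateCol Unit b) (replicateRow Unit b) (of fun _ _ => c)).submatrix
        (Equiv.optionEquivSumPUnit ι) (Equiv.optionEquivSumPUnit ι) := by
  ext (_ | i) (_ | j) <;> rfl

theorem isHermitian_bordered [Star K] [TrivialStar K] {A : Matrix ι ι K} (hA : A.IsHermitian)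
    (b : ι → K) (c : K) : (bordered A b c).IsHermitian := by
  ext (_ | i) (_ | j) <;> simp only [conjTranspose_apply, bordered, star_trivial]
  simpa using hA.apply i j

variable [Fintype ι] [DecidableEq ι]

theorem det_bordered [CommRing K] (A : Matrix ι ι K) (b : ι → K) (c : K) (hA : IsUnit A.det) :
    (bordered A b c).det = A.det * (c - b ⬝ᵥ A⁻¹ *ᵥ b) := by
  let := A.invertibleOfIsUnitDet hA
  rw [bordered_eq_submatrix_fromBlocks, det_submatrix_equiv_self, det_fromBlocks₁₁,
    invOf_eq_nonsing_inv, Matrix.mul_assoc, ← replicateCol_mulVec]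
  congr 1
  exact det_unique _

theorem posDef_bordered_iff [Field K] [PartialOrder K] [StarRing K] [TrivialStar K]
    [StarOrderedRing K] {A : Matrix ι ι K} (hA : A.PosDef) (b : ι → K) (c : K) :
    (bordered A b c).PosDef ↔ b ⬝ᵥ A⁻¹ *ᵥ b < c := by
  let := hA.isUnit.invertible
  have hB : (replicateCol Unit b)ᴴ = replicateRow Unit b := by
    rw [conjTranspose_replicateCol, star_trivial]
  rw [bordered_eq_submatrix_fromBlocks, posDef_submatrix_equiv, ← hB,
    posDef_fromBlocks₁₁_iff _ _ hA, hB, posDef_unique_iff, Matrix.mul_assoc,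
    ← replicateCol_mulVec]
  simp

end Bordered

section BlockDiagonal

variable {o : Type*} [Fintype o] [DecidableEq o] {p : o → Type*} [∀ i, Fintype (p i)]

theorem blockDiagonal'_mulVec_apply [NonUnitalNonAssocSemiring R] (M : ∀ i, Matrix (p i) (p i) R)
    (x : (Σ i, p i) → R) (i : o) (j : p i) :
    (blockDiagonal' M *ᵥ x) ⟨i, j⟩ = (M i *ᵥ fun j' => x ⟨i, j'⟩) j := by
  simp only [mulVec, dotProduct, Fintype.sum_sigma]
  rw [Finset.sum_eq_single i (fun i' _ hi' => by simp [blockDiagonal'_apply_ne M _ _ hi'.symm])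
    (by simp)]
  simp [blockDiagonal'_apply_eq]

theorem dotProduct_blockDiagonal'_mulVec [NonUnitalNonAssocSemiring R]
    (M : ∀ i, Matrix (p i) (p i) R) (x y : (Σ i, p i) → R) :
    x ⬝ᵥ blockDiagonal' M *ᵥ y = ∑ i, (fun j => x ⟨i, j⟩) ⬝ᵥ M i *ᵥ fun j => y ⟨i, j⟩ := by
  simp only [dotProduct, Fintype.sum_sigma, blockDiagonal'_mulVec_apply]

theorem PosDef.blockDiagonal' [CommRing R] [PartialOrder R] [StarRing R] [IsOrderedAddMonoid R]
    {M : ∀ i, Matrix (p i) (p i) R} (hM : ∀ i, (M i).PosDef) : (blockDiagonal' M).PosDef := by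
  refine .of_dotProduct_mulVec_pos (isHermitian_blockDiagonal'_iff.mpr fun i => (hM i).1)
    fun x hx => ?_
  obtain ⟨⟨i, j⟩, hij⟩ := Function.ne_iff.mp hx
  rw [dotProduct_blockDiagonal'_mulVec]
  refine Finset.sum_pos' (fun i _ => (hM i).posSemidef.dotProduct_mulVec_nonneg _)
    ⟨i, Finset.mem_univ _, (hM i).dotProduct_mulVec_pos (Function.ne_iff.mpr ⟨j, hij⟩)⟩

variable [∀ i, DecidableEq (p i)]

theorem det_blockDiagonal' [CommRing R] (M : ∀ i, Matrix (p i) (p i) R) :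
    (blockDiagonal' M).det = ∏ i, (M i).det := by
  let := LinearOrder.lift' (Fintype.equivFin o) (Equiv.injective _)
  rw [(blockTriangular_blockDiagonal' M).det_fintype]
  refine Finset.prod_congr rfl fun i _ => ?_
  rw [← det_submatrix_equiv_self (Equiv.sigmaSubtype i).symm]
  congr 1
  ext j j'
  exact blockDiagonal'_apply_eq M i j j'

theorem inv_blockDiagonal' [CommRing R] {M : ∀ i, Matrix (p i) (p i) R}
    (hM : ∀ i, IsUnit (M i).det) : (blockDiagonal' M)⁻¹ = blockDiagonal' fun i => (M i)⁻¹ :=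
  inv_eq_right_inv <| by
    simp only [← blockDiagonal'_mul, mul_nonsing_inv _ (hM _)]
    exact blockDiagonal'_one

end BlockDiagonal

end Matrix

open Matrix

def chainMatrix (l : List ℤ) : Matrix (Fin l.length) (Fin l.length) ℚ :=
  fun j j' =>
    if (j : ℕ) = (j' : ℕ) then ((l.get j : ℤ) : ℚ)
    else if (j : ℕ) + 1 = (j' : ℕ) ∨ (j' : ℕ) + 1 = (j : ℕ) then -1 else 0

def meetFirstVec (m : ℕ) : Fin m → ℚ := fun j => if (j : ℕ) = 0 then -1 else 0

theorem chainMatrix_cons (a : ℤ) (l : List ℤ) :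
    chainMatrix (a :: l) =
      (bordered (chainMatrix l) (meetFirstVec l.length) a).submatrix (finSuccEquiv _)
        (finSuccEquiv _) := by
  ext i j
  induction i using Fin.cases <;> induction j using Fin.cases <;>
    simp [chainMatrix, bordered, meetFirstVec, Fin.val_succ, eq_comm]

theorem chainMatrix_cons_submatrix_succ (a : ℤ) (l : List ℤ) :
    (chainMatrix (a :: l)).submatrix Fin.succ Fin.succ = chainMatrix l := by
  ext i j
  simp [chainMatrix, Fin.val_succ]

-- Cofactor expansion along the first row; the second minor is expanded along its first column.
theorem det_chainMatrix : ∀ l : List ℤ, (chainMatrix l).det = chainDet l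
  | [] => by simp [chainDet]
  | [a] => by simp [chainMatrix, chainDet]
  | a :: b :: l => by
    have hminor₀ : ((chainMatrix (a :: b :: l)).submatrix Fin.succ Fin.succ).det =
        chainDet (b :: l) :=
      (congrArg det (chainMatrix_cons_submatrix_succ a (b :: l))).trans (det_chainMatrix (b :: l))
    have hminor₁ : ((chainMatrix (a :: b :: l)).submatrix Fin.succ (Fin.succAbove 1)).det =
        -chainDet l := by
      have hsub : ((chainMatrix (a :: b :: l)).submatrix Fin.succ (Fin.succAbove 1)).submatrix
          (Fin.succAbove 0) Fin.succ = chainMatrix l := by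
        ext i j
        simp [chainMatrix, Fin.val_succ, Fin.succAbove]
      rw [det_succ_column_zero, Finset.sum_eq_single 0 (fun i _ hi => by
        simp [chainMatrix, Fin.val_succ, hi]) (by simp), hsub, det_chainMatrix l]
      simp [chainMatrix]
    rw [det_succ_row_zero, Fin.sum_univ_succ, Finset.sum_eq_single 0 (fun i _ hi => by
      simp [chainMatrix, Fin.val_succ, hi]) (by simp), Fin.succAbove_zero, hminor₀,
      Fin.succ_zero_eq_one, hminor₁]
    simp [chainMatrix, chainDet, sub_eq_add_neg]

theorem chainDet_tail_lt : ∀ l : List ℤ, l ≠ [] → (∀ a ∈ l, 2 ≤ a) →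
    0 ≤ chainDet l.tail ∧ chainDet l.tail < chainDet l
  | [], hl, _ => absurd rfl hl
  | [a], _, h => by
    have ha := h a List.mem_cons_self
    simp only [List.tail_cons, chainDet]
    omega
  | a :: b :: l, _, h => by
    obtain ⟨h0, h1⟩ := chainDet_tail_lt (b :: l) (List.cons_ne_nil b l)
      fun x hx => h x (List.mem_cons_of_mem a hx)
    have ha := h a List.mem_cons_self
    simp only [List.tail_cons, chainDet] at h0 h1 ⊢
    constructor <;> nlinarith

theorem eTilde_lt_one {l : List ℤ} (hl : l ≠ []) (h : ∀ a ∈ l, 2 ≤ a) : eTilde l < 1 := by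
  obtain ⟨h0, h1⟩ := chainDet_tail_lt l hl h
  rw [eTilde, div_lt_one (by exact_mod_cast h0.trans_lt h1)]
  exact_mod_cast h1

theorem meetFirstVec_dotProduct_inv_chainMatrix_mulVec {l : List ℤ} (hl : l ≠ []) :
    meetFirstVec l.length ⬝ᵥ (chainMatrix l)⁻¹ *ᵥ meetFirstVec l.length = eTilde l := by
  obtain ⟨a, l, rfl⟩ := List.exists_cons_of_ne_nil hl
  have hsingle : meetFirstVec (a :: l).length = -Pi.single 0 1 := by
    ext j
    induction j using Fin.cases <;> simp [meetFirstVec, Fin.val_succ]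
  rw [hsingle, mulVec_neg, neg_dotProduct_neg, mulVec_single_one, single_one_dotProduct,
    col_apply, inv_def, Matrix.smul_apply, adjugate_fin_succ_eq_det_submatrix, Fin.succAbove_zero,
    chainMatrix_cons_submatrix_succ, det_chainMatrix, det_chainMatrix, Ring.inverse_eq_inv',
    eTilde, List.tail_cons]
  simp [div_eq_inv_mul]

theorem posDef_chainMatrix : ∀ l : List ℤ, (∀ a ∈ l, 2 ≤ a) → (chainMatrix l).PosDef
  | [], _ =>
    .of_dotProduct_mulVec_pos (by ext i; exact i.elim0) fun _ hx => (hx (funext fun i => i.elim0)).elim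
  | a :: l, h => by
    have ha := h a List.mem_cons_self
    have hl : ∀ x ∈ l, 2 ≤ x := fun x hx => h x (List.mem_cons_of_mem a hx)
    rw [chainMatrix_cons, posDef_submatrix_equiv, posDef_bordered_iff (posDef_chainMatrix l hl)]
    rcases eq_or_ne l [] with rfl | hne
    · simpa using (by omega : 0 < a)
    · rw [meetFirstVec_dotProduct_inv_chainMatrix_mulVec hne]
      linarith [eTilde_lt_one hne hl, (by exact_mod_cast ha : (2 : ℚ) ≤ a)]

theorem configMatrix_eq_bordered (n : ℕ) (N : ℤ) (L : Fin n → List ℤ) :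
    configMatrix n N L =
      bordered (blockDiagonal' fun i => chainMatrix (L i))
        (fun s => meetFirstVec (L s.1).length s.2) N := by
  ext (_ | ⟨i, j⟩) (_ | ⟨i', j'⟩)
  · rfl
  · rfl
  · rfl
  · by_cases h : i = i'
    · subst h
      simp [configMatrix, bordered, blockDiagonal'_apply_eq, chainMatrix]
    · simp [configMatrix, bordered, blockDiagonal'_apply_ne _ _ _ h, h]

theorem meetFirstVec_dotProduct_inv_blockDiagonal'_mulVec {n : ℕ} {L : Fin n → List ℤ}
    (hne : ∀ i, L i ≠ []) (hadm : ∀ i, ∀ a ∈ L i, 2 ≤ a) :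
    (fun s => meetFirstVec (L s.1).length s.2) ⬝ᵥ
        (blockDiagonal' fun i => chainMatrix (L i))⁻¹ *ᵥ
          (fun s => meetFirstVec (L s.1).length s.2) =
      ∑ i, eTilde (L i) := by
  rw [inv_blockDiagonal' fun i => (isUnit_iff_isUnit_det _).mp
    (posDef_chainMatrix _ (hadm i)).isUnit, dotProduct_blockDiagonal'_mulVec]
  exact Finset.sum_congr rfl fun i _ => meetFirstVec_dotProduct_inv_chainMatrix_mulVec (hne i)

/-- (From the proof of Theorem 4.4; cf. Koras–Russell 2.1.1) For the
configuration `E = E₁ + … + Eₙ + E_h` of the non-extendable `C*`-ruling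
construction, with each `Eᵢ` an admissible chain:
`d(E₁ + … + Eₙ + E_h) = d(E₁)⋯d(Eₙ)·(N − Σᵢ ẽ(Eᵢ))`, and consequently the
intersection matrix of `E` is negative definite (i.e. its negative is
positive definite) if and only if `Σᵢ ẽ(Eᵢ) < N`. -/
theorem config_det_and_negdef (n : ℕ) (N : ℤ) (L : Fin n → List ℤ)
    (hne : ∀ i, L i ≠ []) (hadm : ∀ i, ∀ a ∈ L i, 2 ≤ a) :
    (configMatrix n N L).det =
      (∏ i, (chainDet (L i) : ℚ)) * ((N : ℚ) - ∑ i, eTilde (L i)) ∧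
    ((∀ v : Option ((i : Fin n) × Fin (L i).length) → ℚ, v ≠ 0 →
        0 < dotProduct v ((configMatrix n N L).mulVec v)) ↔
      ∑ i, eTilde (L i) < (N : ℚ)) := by
  have hD : (blockDiagonal' fun i => chainMatrix (L i)).PosDef :=
    PosDef.blockDiagonal' fun i => posDef_chainMatrix _ (hadm i)
  have hschur := meetFirstVec_dotProduct_inv_blockDiagonal'_mulVec hne hadm
  rw [configMatrix_eq_bordered]
  constructor
  · rw [det_bordered _ _ _ ((isUnit_iff_isUnit_det _).mp hD.isUnit), det_blockDiagonal', hschur]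
    simp [det_chainMatrix]
  · rw [← (isHermitian_bordered hD.1 _ _).posDef_iff_dotProduct_mulVec_pos,
      posDef_bordered_iff hD, hschur]
end
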